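/- Let n be a positive integer, r ∈ ℝ, μ ∈ ℝⁿ, and let σ be an invertible real n × n matrix; set κ := σ⁻¹(μ − r·𝟙) and k := |κ|². Let T > 0, ρ ≥ 0, A > 0, and R > 0 with R ≠ 1; set b := (R−1)(r + k/(2R))/R, assume b + ρ/R ≠ 0, let F(t) = A^{1/R}e^{−b(T−t)} + (e^{−ρt/R}/(b+ρ/R))(1 − e^{−(b+ρ/R)(T−t)}), f := F^R, γ(t) := e^{−ρt/R}/F(t), and π_M := R^{−1}(σσᵀ)⁻¹(μ − r·𝟙). Then for every t ∈ [0, T] and w > 0, the pair (c*, θ*) = (γ(t)·w, π_M·w) maximizes over c > 0 and θ ∈ ℝⁿ the Hamiltonian (c, θ) ↦ e^{−ρt}·c^{1−R}/(1−R) + (r·w + θ·(μ − r·𝟙) − c)·f(t)·w^{−R} + (1/2)·θᵀσσᵀθ·(−R·f(t)·w^{−R−1}), and the maximum value equals −f′(t)·w^{1−R}/(1−R); moreover f(T) = A. That is, V(t, w) = f(t)·w^{1−R}/(1−R) solves the HJB equation of the Merton problem with terminal condition V(T, w) = A·w^{1−R}/(1−R), with optimal consumption c_t = γ(t)·w and optimal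 portfolio θ_t = π_M·w. -/

import Mathlib

/-!
Since `V = f w^{1-R}/(1-R)` is homothetic in wealth, `V_w = f w^{-R}` and `V_ww = -R V_w / w`.
The Hamiltonian then splits into a concave function of `c`, maximal where the marginal utility
`e^{-ρt} c^{-R}` equals `V_w` (this gives `c* = γ w`), and a concave quadratic form in `θ`, maximal
where `σσᵀ θ = (w/R)(μ - r𝟙)` (this gives `θ* = w π_M`). Its maximum is
`V_w (R c*/(1-R) + r w + w k/(2R))`, and this equals `-f′ w^{1-R}/(1-R)` because `F` solves the
linear equation `F′ = b F - e^{-ρt/R}`, that is `f′ = R f (b - γ)`.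
-/

open Matrix Real

theorem rpow_sub_one_div_le_sub_one {q u : ℝ} (hq : q < 1) (hq0 : q ≠ 0) (hu : 0 < u) :
    (u ^ q - 1) / q ≤ u - 1 := by
  rcases hq0.lt_or_gt with hneg | hpos
  · have hexp : 1 + q * log u ≤ u ^ q := by
      rw [rpow_def_of_pos hu, mul_comm q]
      linarith [add_one_le_exp (log u * q)]
    have hlog : q * (u - 1) ≤ q * log u :=
      mul_le_mul_of_nonpos_left (log_le_sub_one_of_pos hu) hneg.le
    rw [div_le_iff_of_neg hneg]
    linarith
  · have hbernoulli := rpow_one_add_le_one_add_mul_self (s := u - 1) (by linarith) hpos.le hq.le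
    rw [add_sub_cancel] at hbernoulli
    rw [div_le_iff₀ hpos]
    linarith

theorem crra_sub_mul_le {R a c c₀ : ℝ} (hR : 0 < R) (hR1 : R ≠ 1) (ha : 0 ≤ a)
    (hc : 0 < c) (hc₀ : 0 < c₀) :
    a * c ^ (1 - R) / (1 - R) - c * (a * c₀ ^ (-R)) ≤
      a * c₀ ^ (1 - R) / (1 - R) - c₀ * (a * c₀ ^ (-R)) := by
  have hq : 1 - R ≠ 0 := sub_ne_zero.2 hR1.symm
  have hc₀R : c₀ ^ (1 - R) = c₀ ^ (-R) * c₀ := by rw [sub_eq_neg_add, rpow_add_one hc₀.ne']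
  have key := rpow_sub_one_div_le_sub_one (by linarith) hq (div_pos hc hc₀)
  rw [div_rpow hc.le hc₀.le] at key
  calc a * c ^ (1 - R) / (1 - R) - c * (a * c₀ ^ (-R))
      = a * c₀ ^ (1 - R) * ((c ^ (1 - R) / c₀ ^ (1 - R) - 1) / (1 - R))
          + a * c₀ ^ (1 - R) / (1 - R) - c * (a * c₀ ^ (-R)) := by
        field_simp; ring
    _ ≤ a * c₀ ^ (1 - R) * (c / c₀ - 1) + a * c₀ ^ (1 - R) / (1 - R) - c * (a * c₀ ^ (-R)) := by
        gcongr
    _ = a * c₀ ^ (1 - R) / (1 - R) - c₀ * (a * c₀ ^ (-R)) := by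
        rw [hc₀R]; field_simp; ring

theorem Matrix.PosSemidef.dotProduct_sub_half_dotProduct_mulVec_le {ι : Type*} [Fintype ι]
    {S : Matrix ι ι ℝ} (hS : S.PosSemidef) {v x : ι → ℝ} (hx : S *ᵥ x = v) (θ : ι → ℝ) :
    θ ⬝ᵥ v - 1 / 2 * (θ ⬝ᵥ S *ᵥ θ) ≤ x ⬝ᵥ v - 1 / 2 * (x ⬝ᵥ S *ᵥ x) := by
  have hsymm : x ⬝ᵥ S *ᵥ θ = θ ⬝ᵥ S *ᵥ x := by
    rw [dotProduct_mulVec, ← mulVec_transpose, ← conjTranspose_eq_transpose_of_trivial,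
      hS.isHermitian.eq, dotProduct_comm]
  have hsq := hS.dotProduct_mulVec_nonneg (x - θ)
  simp only [star_trivial, mulVec_sub, sub_dotProduct, dotProduct_sub, hsymm, hx] at hsq
  rw [hx]
  linarith

/-- The paper's `F`, with `a = A^{1/R}` and `δ = ρ/R`. -/
noncomputable def mertonF (a b δ T t : ℝ) : ℝ :=
  a * exp (-(b * (T - t))) + exp (-(δ * t)) / (b + δ) * (1 - exp (-((b + δ) * (T - t))))

theorem hasDerivAt_mertonF {a b δ T : ℝ} (hbδ : b + δ ≠ 0) (t : ℝ) :
    HasDerivAt (mertonF a b δ T) (b * mertonF a b δ T t - exp (-(δ * t))) t := by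
  have hlin (c : ℝ) : HasDerivAt (fun s => -(c * (T - s))) c t := by
    simpa using (((hasDerivAt_id' t).const_sub T).const_mul c).fun_neg
  have hδ : HasDerivAt (fun s => -(δ * s)) (-δ) t := by
    simpa using ((hasDerivAt_id' t).const_mul δ).fun_neg
  refine (((hlin b).exp.const_mul a).fun_add
    ((hδ.exp.div_const (b + δ)).fun_mul ((hlin (b + δ)).exp.const_sub 1))).congr_deriv ?_
  rw [mertonF]
  field_simp
  ring

theorem one_sub_exp_neg_mul_div_nonneg (x : ℝ) {s : ℝ} (hs : 0 ≤ s) :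
    0 ≤ (1 - exp (-(x * s))) / x := by
  rcases lt_trichotomy x 0 with hx | rfl | hx
  · exact div_nonneg_of_nonpos (sub_nonpos.2 (one_le_exp (by nlinarith))) hx.le
  · simp
  · exact div_nonneg (sub_nonneg.2 (exp_le_one_iff.2 (by nlinarith))) hx.le

theorem mertonF_pos {a b δ T t : ℝ} (ha : 0 < a) (ht : t ≤ T) : 0 < mertonF a b δ T t := by
  have := one_sub_exp_neg_mul_div_nonneg (b + δ) (sub_nonneg.2 ht)
  rw [mertonF, div_mul_eq_mul_div, mul_div_assoc]
  positivity

@[simp] theorem mertonF_self (a b δ T : ℝ) : mertonF a b δ T T = a := by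
  simp [mertonF]

theorem hasDerivAt_mertonF_rpow {a b δ T t : ℝ} (R : ℝ) (ha : 0 < a) (hbδ : b + δ ≠ 0)
    (ht : t ≤ T) :
    HasDerivAt (fun s => mertonF a b δ T s ^ R)
      (R * mertonF a b δ T t ^ R * (b - exp (-(δ * t)) / mertonF a b δ T t)) t := by
  have hF := (mertonF_pos (b := b) (δ := δ) ha ht).ne'
  refine ((hasDerivAt_mertonF hbδ t).rpow_const (Or.inl hF)).congr_deriv ?_
  rw [rpow_sub_one hF]
  field_simp

theorem rpow_mul_rpow_neg_eq_exp_mul_rpow_neg {ρ R t y w : ℝ} (hR : R ≠ 0) (hy : 0 < y)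
    (hw : 0 < w) :
    y ^ R * w ^ (-R) = exp (-(ρ * t)) * (exp (-(ρ * t / R)) / y * w) ^ (-R) := by
  have hE : exp (-(ρ * t)) = exp (-(ρ * t / R)) ^ R := by
    rw [← exp_mul]
    field_simp
  rw [hE, mul_rpow (by positivity) hw.le, div_rpow (exp_pos _).le hy.le, rpow_neg (exp_pos _).le,
    rpow_neg hy.le]
  field_simp

theorem Matrix.dotProduct_mul_transpose_inv_mulVec {ι : Type*} [Fintype ι] [DecidableEq ι]
    (σ : Matrix ι ι ℝ) (v : ι → ℝ) :
    ((σ * σᵀ)⁻¹ *ᵥ v) ⬝ᵥ v = (σ⁻¹ *ᵥ v) ⬝ᵥ (σ⁻¹ *ᵥ v) := by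
  rw [mul_inv_rev, ← transpose_nonsing_inv, ← mulVec_mulVec, mulVec_transpose,
    ← dotProduct_mulVec, dotProduct_comm]

theorem Matrix.mul_transpose_mulVec_inv_mulVec {ι : Type*} [Fintype ι] [DecidableEq ι]
    {σ : Matrix ι ι ℝ} (hσ : IsUnit σ) (v : ι → ℝ) :
    (σ * σᵀ) *ᵥ ((σ * σᵀ)⁻¹ *ᵥ v) = v := by
  have hdet := (isUnit_iff_isUnit_det _).1 (hσ.mul ((isUnit_transpose σ).2 hσ))
  rw [mulVec_mulVec, mul_nonsing_inv _ hdet, one_mulVec]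

/-- The HJB Hamiltonian of the Merton problem, with `a = e^{-ρt}`, `Vw = V_w`, `Vww = V_ww`,
`S = σσᵀ` and `α = μ - r𝟙`. -/
noncomputable def mertonHamiltonian {ι : Type*} [Fintype ι] (S : Matrix ι ι ℝ) (α : ι → ℝ)
    (a r R w Vw Vww c : ℝ) (θ : ι → ℝ) : ℝ :=
  a * c ^ (1 - R) / (1 - R) + (r * w + θ ⬝ᵥ α - c) * Vw + 1 / 2 * (θ ⬝ᵥ S *ᵥ θ) * Vww

section Hamiltonian

variable {ι : Type*} [Fintype ι] {S : Matrix ι ι ℝ} {α θ₀ : ι → ℝ} {a r R w Vw Vww c₀ : ℝ}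

theorem mertonHamiltonian_le (hR : 0 < R) (hR1 : R ≠ 1) (hw : 0 < w) (ha : 0 ≤ a)
    (hc₀ : 0 < c₀) (hVw : Vw = a * c₀ ^ (-R)) (hVww : Vww = -(R * Vw / w))
    (hS : S.PosSemidef) (hθ₀ : S *ᵥ θ₀ = (w / R) • α) {c : ℝ} (hc : 0 < c) (θ : ι → ℝ) :
    mertonHamiltonian S α a r R w Vw Vww c θ ≤ mertonHamiltonian S α a r R w Vw Vww c₀ θ₀ := by
  have hcons := crra_sub_mul_le hR hR1 ha hc hc₀
  have hport := hS.dotProduct_sub_half_dotProduct_mulVec_le hθ₀ θ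
  rw [← hVw] at hcons
  simp only [dotProduct_smul, smul_eq_mul] at hport
  have hscale : 0 ≤ R * Vw / w := by
    rw [hVw]
    positivity
  have hrescale (X Q : ℝ) : R * Vw / w * (w / R * X - 1 / 2 * Q) = X * Vw + 1 / 2 * Q * Vww := by
    rw [hVww]
    field_simp
    ring
  have hport' := mul_le_mul_of_nonneg_left hport hscale
  rw [hrescale, hrescale] at hport'
  unfold mertonHamiltonian
  linarith

theorem mertonHamiltonian_eq (hR : R ≠ 0) (hR1 : R ≠ 1) (hw : w ≠ 0) (hc₀ : c₀ ≠ 0)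
    (hVw : Vw = a * c₀ ^ (-R)) (hVww : Vww = -(R * Vw / w)) (hθ₀ : S *ᵥ θ₀ = (w / R) • α) :
    mertonHamiltonian S α a r R w Vw Vww c₀ θ₀ =
      Vw * (R * c₀ / (1 - R) + r * w + θ₀ ⬝ᵥ α / 2) := by
  have hq : 1 - R ≠ 0 := sub_ne_zero.2 hR1.symm
  have hutil : a * c₀ ^ (1 - R) = Vw * c₀ := by
    rw [hVw, sub_eq_neg_add, rpow_add_one hc₀]
    ring
  rw [mertonHamiltonian, mul_div_assoc, ← mul_div_assoc, hutil, hθ₀, dotProduct_smul, smul_eq_mul,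
    hVww]
  field_simp
  ring

end Hamiltonian

theorem merton_hjb_solution_general (n : ℕ)
    (r ρ T A R b k : ℝ) (μ : Fin n → ℝ) (σ : Matrix (Fin n) (Fin n) ℝ)
    (hσ : IsUnit σ) (κ πM : Fin n → ℝ) (F f γ : ℝ → ℝ)
    (hA : 0 < A) (hR : 0 < R) (hR1 : R ≠ 1)
    (hκ : κ = σ⁻¹.mulVec (μ - r • fun _ => (1 : ℝ)))
    (hk : k = κ ⬝ᵥ κ)
    (hb : b = (R - 1) * (r + k / (2 * R)) / R) (hbρ : b + ρ / R ≠ 0)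
    (hF : ∀ t : ℝ, F t =
        A ^ (1 / R) * Real.exp (-(b * (T - t))) +
          Real.exp (-(ρ * t / R)) / (b + ρ / R) *
            (1 - Real.exp (-((b + ρ / R) * (T - t)))))
    (hf : ∀ t : ℝ, f t = F t ^ R)
    (hγ : ∀ t : ℝ, γ t = Real.exp (-(ρ * t / R)) / F t)
    (hπ : πM = R⁻¹ • (σ * σᵀ)⁻¹.mulVec (μ - r • fun _ => (1 : ℝ))) :
    ∀ t ∈ Set.Icc (0 : ℝ) T, ∀ w : ℝ, 0 < w →
      (∀ c : ℝ, 0 < c → ∀ θ : Fin n → ℝ,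
          Real.exp (-(ρ * t)) * c ^ (1 - R) / (1 - R) +
              (r * w + θ ⬝ᵥ (μ - r • fun _ => (1 : ℝ)) - c) * (f t * w ^ (-R)) +
              1 / 2 * (θ ⬝ᵥ (σ * σᵀ).mulVec θ) * (-(R * f t * w ^ (-R - 1))) ≤
            Real.exp (-(ρ * t)) * (γ t * w) ^ (1 - R) / (1 - R) +
              (r * w + (w • πM) ⬝ᵥ (μ - r • fun _ => (1 : ℝ)) - γ t * w) *
                (f t * w ^ (-R)) +
              1 / 2 * ((w • πM) ⬝ᵥ (σ * σᵀ).mulVec (w • πM)) *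
                (-(R * f t * w ^ (-R - 1)))) ∧
      (Real.exp (-(ρ * t)) * (γ t * w) ^ (1 - R) / (1 - R) +
          (r * w + (w • πM) ⬝ᵥ (μ - r • fun _ => (1 : ℝ)) - γ t * w) *
            (f t * w ^ (-R)) +
          1 / 2 * ((w • πM) ⬝ᵥ (σ * σᵀ).mulVec (w • πM)) *
            (-(R * f t * w ^ (-R - 1))) =
        -(deriv f t) * w ^ (1 - R) / (1 - R)) ∧
      f T = A := by
  have hFm : F = mertonF (A ^ (1 / R)) b (ρ / R) T :=
    funext fun t => by rw [hF, mertonF, mul_div_right_comm]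
  have hSPSD : (σ * σᵀ).PosSemidef := by
    simpa [conjTranspose_eq_transpose_of_trivial] using posSemidef_self_mul_conjTranspose σ
  intro t ht w hw
  have hFt : 0 < F t := hFm ▸ mertonF_pos (rpow_pos_of_pos hA _) ht.2
  have hc₀ : 0 < γ t * w := by rw [hγ]; positivity
  have hVw : f t * w ^ (-R) = exp (-(ρ * t)) * (γ t * w) ^ (-R) := by
    rw [hf, hγ]
    exact rpow_mul_rpow_neg_eq_exp_mul_rpow_neg hR.ne' hFt hw
  have hVww : -(R * f t * w ^ (-R - 1)) = -(R * (f t * w ^ (-R)) / w) := by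
    rw [rpow_sub_one hw.ne']
    ring
  have hθ₀ : (σ * σᵀ) *ᵥ (w • πM) = (w / R) • (μ - r • fun _ => (1 : ℝ)) := by
    rw [mulVec_smul, hπ, mulVec_smul, mul_transpose_mulVec_inv_mulVec hσ, smul_smul, div_eq_mul_inv]
  refine ⟨fun c hc θ => mertonHamiltonian_le hR hR1 hw (exp_pos _).le hc₀ hVw hVww hSPSD hθ₀ hc θ,
    ?_, by rw [hf, hFm, mertonF_self, one_div, rpow_inv_rpow hA.le hR.ne']⟩
  have hθα : (w • πM) ⬝ᵥ (μ - r • fun _ => (1 : ℝ)) = w * (k / R) := by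
    rw [hπ, smul_dotProduct, smul_dotProduct, dotProduct_mul_transpose_inv_mulVec, ← hκ, ← hk,
      smul_eq_mul, smul_eq_mul, div_eq_inv_mul]
  have hderiv : deriv f t = R * f t * (b - γ t) := by
    rw [show f = fun s => F s ^ R from funext hf, hγ, hFm, mul_div_right_comm]
    exact (hasDerivAt_mertonF_rpow R (rpow_pos_of_pos hA _) hbρ ht.2).deriv
  have hw1 : w ^ (1 - R) = w ^ (-R) * w := by rw [sub_eq_neg_add, rpow_add_one hw.ne']
  refine (mertonHamiltonian_eq hR.ne' hR1 hw.ne' hc₀.ne' hVw hVww hθ₀).trans ?_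
  rw [hθα, hderiv, hb, hw1]
  field_simp [sub_ne_zero.2 hR1.symm]
  ring

/-- The Merton solution solves the HJB equation: with `κ = σ⁻¹(μ − r𝟙)`, `k = |κ|²`,
`b = (R−1)(r + k/(2R))/R`, `f = F^R`, `γ(t) = e^{−ρt/R}/F(t)`,
`π_M = R⁻¹(σσᵀ)⁻¹(μ − r𝟙)`, the pair `(c*, θ*) = (γ(t)w, w·π_M)` maximizes the
HJB Hamiltonian for each `t ∈ [0,T]` and `w > 0`, the maximum value equals
`−f′(t)·w^{1−R}/(1−R)`, and `f(T) = A`. -/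
theorem merton_hjb_solution (n : ℕ) (hn : 0 < n)
    (r ρ T A R b k : ℝ) (μ : Fin n → ℝ) (σ : Matrix (Fin n) (Fin n) ℝ)
    (hσ : IsUnit σ) (κ πM : Fin n → ℝ) (F f γ : ℝ → ℝ)
    (hT : 0 < T) (hρ : 0 ≤ ρ) (hA : 0 < A) (hR : 0 < R) (hR1 : R ≠ 1)
    (hκ : κ = σ⁻¹.mulVec (μ - r • fun _ => (1 : ℝ)))
    (hk : k = κ ⬝ᵥ κ)
    (hb : b = (R - 1) * (r + k / (2 * R)) / R) (hbρ : b + ρ / R ≠ 0)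
    (hF : ∀ t : ℝ, F t =
        A ^ (1 / R) * Real.exp (-(b * (T - t))) +
          Real.exp (-(ρ * t / R)) / (b + ρ / R) *
            (1 - Real.exp (-((b + ρ / R) * (T - t)))))
    (hf : ∀ t : ℝ, f t = F t ^ R)
    (hγ : ∀ t : ℝ, γ t = Real.exp (-(ρ * t / R)) / F t)
    (hπ : πM = R⁻¹ • (σ * σᵀ)⁻¹.mulVec (μ - r • fun _ => (1 : ℝ))) :
    ∀ t ∈ Set.Icc (0 : ℝ) T, ∀ w : ℝ, 0 < w →
      (∀ c : ℝ, 0 < c → ∀ θ : Fin n → ℝ,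
          Real.exp (-(ρ * t)) * c ^ (1 - R) / (1 - R) +
              (r * w + θ ⬝ᵥ (μ - r • fun _ => (1 : ℝ)) - c) * (f t * w ^ (-R)) +
              1 / 2 * (θ ⬝ᵥ (σ * σᵀ).mulVec θ) * (-(R * f t * w ^ (-R - 1))) ≤
            Real.exp (-(ρ * t)) * (γ t * w) ^ (1 - R) / (1 - R) +
              (r * w + (w • πM) ⬝ᵥ (μ - r • fun _ => (1 : ℝ)) - γ t * w) *
                (f t * w ^ (-R)) +
              1 / 2 * ((w • πM) ⬝ᵥ (σ * σᵀ).mulVec (w • πM)) *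
                (-(R * f t * w ^ (-R - 1)))) ∧
      (Real.exp (-(ρ * t)) * (γ t * w) ^ (1 - R) / (1 - R) +
          (r * w + (w • πM) ⬝ᵥ (μ - r • fun _ => (1 : ℝ)) - γ t * w) *
            (f t * w ^ (-R)) +
          1 / 2 * ((w • πM) ⬝ᵥ (σ * σᵀ).mulVec (w • πM)) *
            (-(R * f t * w ^ (-R - 1))) =
        -(deriv f t) * w ^ (1 - R) / (1 - R)) ∧
      f T = A :=
  merton_hjb_solution_general n r ρ T A R b k μ σ hσ κ πM F f γ hA hR hR1 hκ hk hb hbρ hF hf hγ hπ
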